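/- arXiv:1510.06056 — 3 statements merged into one kernel-verified Lean document; each statement's English description precedes it below -/
import Mathlib

section
/- Let p be an odd prime, ℓ ≥ 0 an integer, j ≥ 0, and set c_ℓ = (p^ℓ − 1)/2. Then the number of m in {1, ..., j} whose p-adic valuation v_p(2m − 1) equals ℓ is given by the sum over t in {0, 1, ..., p−1} with t ≠ (p−1)/2 of ⌊(j + p^{ℓ+1} − 1 − c_ℓ − p^ℓ t) / p^{ℓ+1}⌋. -/
/-!
Put `q = p ^ (ℓ + 1)` and `c = (p ^ ℓ - 1) / 2`. For `n ≠ 0`, `v_p(n) = ℓ` iff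
`n ≡ p ^ ℓ * r (mod q)` for some `r` prime to `p`, and the odd numbers `2 * t + 1` with `t < p`,
`t ≠ (p - 1) / 2` run through the nonzero residues mod `p`. As `2` is invertible mod `q` and
`2 * (c + 1 + p ^ ℓ * t) - 1 = p ^ ℓ * (2 * t + 1)`, the `m` with `v_p(2 * m - 1) = ℓ` are exactly
those in the residue classes of `c + 1 + p ^ ℓ * t` mod `q`. These classes are pairwise distinct,
their representatives lie in `[1, q]`, and a class `a ∈ [1, q]` meets `[1, j]` in
`(j + q - a) / q` points.
-/

open Finset

theorem Nat.card_filter_Icc_modEq {q a : ℕ} (j : ℕ) (hq : 0 < q) (ha : 1 ≤ a) (haq : a ≤ q) :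
    #{m ∈ Icc 1 j | m ≡ a [MOD q]} = (j + q - a) / q := by
  have hq' : (0 : ℚ) < q := by exact_mod_cast hq
  have hfloor_neg : ⌊((0 : ℕ) - a : ℚ) / q⌋ = -1 := by
    rw [Int.floor_eq_iff, le_div_iff₀ hq', div_lt_iff₀ hq']
    push_cast
    constructor <;> linarith [(Nat.cast_le (α := ℚ)).2 haq, (Nat.one_le_cast (α := ℚ)).2 ha]
  have hshift : (j - a : ℚ) / q + 1 = ((j + q - a : ℕ) : ℚ) / q := by
    rw [Nat.cast_sub (by omega)]
    field_simp
    push_cast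
    ring
  zify
  rw [← zero_add 1, Icc_add_one_left_eq_Ioc, Nat.Ioc_filter_modEq_card 0 j hq a, hfloor_neg,
    sub_neg_eq_add, ← Int.floor_add_one, hshift, Rat.floor_natCast_div_natCast]
  exact max_eq_left (by positivity)

theorem padicValNat_eq_iff_exists_modEq {p n ℓ : ℕ} (hp : 1 < p) (hn : n ≠ 0) :
    padicValNat p n = ℓ ↔ ∃ r, ¬p ∣ r ∧ n ≡ p ^ ℓ * r [MOD p ^ (ℓ + 1)] := by
  have hpℓ : p ^ ℓ ≠ 0 := pow_ne_zero _ (by omega)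
  have hsucc : ∀ r, p ^ (ℓ + 1) ∣ p ^ ℓ * r ↔ p ∣ r := fun r => by
    rw [pow_succ, Nat.mul_dvd_mul_iff_left (Nat.pos_of_ne_zero hpℓ)]
  have hval : padicValNat p n = ℓ ↔ p ^ ℓ ∣ n ∧ ¬p ^ (ℓ + 1) ∣ n := by
    rw [padicValNat_dvd_iff_le_of_ne_one hp.ne' hn, padicValNat_dvd_iff_le_of_ne_one hp.ne' hn]
    omega
  rw [hval]
  constructor
  · rintro ⟨⟨r, rfl⟩, hr⟩
    exact ⟨r, (hsucc r).not.mp hr, rfl⟩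
  · rintro ⟨r, hr, h⟩
    rw [h.dvd_iff (pow_dvd_pow p ℓ.le_succ), h.dvd_iff dvd_rfl, hsucc]
    exact ⟨dvd_mul_right _ _, hr⟩

theorem Nat.exists_two_mul_add_one_modEq {p r : ℕ} (hp : Odd p) (hr : ¬p ∣ r) :
    ∃ t < p, t ≠ (p - 1) / 2 ∧ 2 * t + 1 ≡ r [MOD p] := by
  have hr0 : r % p ≠ 0 := mt Nat.dvd_of_mod_eq_zero hr
  have hrp : r % p < p := Nat.mod_lt _ hp.pos
  obtain ⟨k, hk⟩ := hp
  rcases Nat.even_or_odd' (r % p) with ⟨s, hs | hs⟩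
  -- `2 * t + 1` is whichever of `r % p` and `r % p + p` is odd
  · refine ⟨s + k, by omega, by omega, ?_⟩
    rw [Nat.ModEq, show 2 * (s + k) + 1 = r % p + p by omega, Nat.add_mod_right, Nat.mod_mod]
  · exact ⟨s, by omega, by omega, by rw [Nat.ModEq, ← hs, Nat.mod_mod]⟩

theorem Nat.not_dvd_two_mul_add_one {p t : ℕ} (ht : t < p) (hne : t ≠ (p - 1) / 2) :
    ¬p ∣ 2 * t + 1 := fun h =>
  hne (by have := Nat.eq_of_dvd_of_lt_two_mul (by omega) h (by omega); omega)

theorem Nat.two_mul_sub_one_div_two_add_one {n : ℕ} (hn : Odd n) : 2 * ((n - 1) / 2) + 1 = n := by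
  obtain ⟨k, rfl⟩ := hn
  omega

theorem Nat.two_mul_sub_one_modEq_iff {q m a b : ℕ} (hq : Odd q) (hm : 1 ≤ m)
    (hab : 2 * a = b + 1) : 2 * m - 1 ≡ b [MOD q] ↔ m ≡ a [MOD q] := by
  have hcop : q.gcd 2 = 1 := Nat.coprime_two_right.mpr hq
  constructor
  · intro h
    refine Nat.ModEq.cancel_left_of_coprime hcop ?_
    rw [hab, ← Nat.sub_add_cancel (by omega : 1 ≤ 2 * m)]
    exact h.add_right 1
  · intro h
    refine Nat.ModEq.add_right_cancel' 1 ?_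
    rw [← hab, Nat.sub_add_cancel (by omega)]
    exact h.mul_left 2

theorem padicValNat_two_mul_sub_one_eq_iff {p ℓ m : ℕ} (hp : 1 < p) (hodd : Odd p) (hm : 1 ≤ m) :
    padicValNat p (2 * m - 1) = ℓ ↔
      ∃ t < p, t ≠ (p - 1) / 2 ∧ m ≡ (p ^ ℓ - 1) / 2 + 1 + p ^ ℓ * t [MOD p ^ (ℓ + 1)] := by
  have hc : 2 * ((p ^ ℓ - 1) / 2) + 1 = p ^ ℓ := Nat.two_mul_sub_one_div_two_add_one hodd.pow
  have hkey : ∀ t, 2 * ((p ^ ℓ - 1) / 2 + 1 + p ^ ℓ * t) = p ^ ℓ * (2 * t + 1) + 1 := fun t => by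
    generalize (p ^ ℓ - 1) / 2 = c at hc ⊢
    rw [← hc]; ring
  rw [padicValNat_eq_iff_exists_modEq hp (by omega)]
  simp_rw [← Nat.two_mul_sub_one_modEq_iff hodd.pow hm (hkey _)]
  constructor
  · rintro ⟨r, hr, h⟩
    obtain ⟨t, ht, hne, htr⟩ := Nat.exists_two_mul_add_one_modEq hodd hr
    exact ⟨t, ht, hne, h.trans (pow_succ p ℓ ▸ htr.symm.mul_left' _)⟩
  · rintro ⟨t, ht, hne, h⟩
    exact ⟨2 * t + 1, Nat.not_dvd_two_mul_add_one ht hne, h⟩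

theorem Nat.eq_of_add_pow_mul_modEq {p ℓ c t t' : ℕ} (hp : 0 < p) (ht : t < p) (ht' : t' < p)
    (h : c + p ^ ℓ * t ≡ c + p ^ ℓ * t' [MOD p ^ (ℓ + 1)]) : t = t' := by
  rw [pow_succ] at h
  exact ((Nat.ModEq.mul_left_cancel_iff' (by positivity)).mp (h.add_left_cancel' c)).eq_of_lt_of_lt
    ht ht'

theorem Icc_filter_padicValNat_two_mul_sub_one_eq_biUnion {p : ℕ} (hp : 1 < p) (hodd : Odd p)
    (ℓ j : ℕ) :
    {m ∈ Icc 1 j | padicValNat p (2 * m - 1) = ℓ} =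
      {t ∈ range p | t ≠ (p - 1) / 2}.biUnion fun t =>
        {m ∈ Icc 1 j | m ≡ (p ^ ℓ - 1) / 2 + 1 + p ^ ℓ * t [MOD p ^ (ℓ + 1)]} := by
  ext m
  simp only [mem_filter, mem_Icc, mem_biUnion, mem_range]
  constructor
  · rintro ⟨hmj, hv⟩
    obtain ⟨t, ht, hne, h⟩ := (padicValNat_two_mul_sub_one_eq_iff hp hodd hmj.1).mp hv
    exact ⟨t, ⟨ht, hne⟩, hmj, h⟩
  · rintro ⟨t, ⟨ht, hne⟩, hmj, h⟩
    exact ⟨hmj, (padicValNat_two_mul_sub_one_eq_iff hp hodd hmj.1).mpr ⟨t, ht, hne, h⟩⟩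

theorem stmt_4 (p ℓ j : ℕ) (hp : p.Prime) (hodd : Odd p) :
    ((Finset.Icc 1 j).filter
      (fun m => padicValNat p (2 * m - 1) = ℓ)).card
      = ∑ t ∈ (Finset.range p).filter (fun t => t ≠ (p - 1) / 2),
          (j + p ^ (ℓ + 1) - 1 - (p ^ ℓ - 1) / 2 - p ^ ℓ * t) / p ^ (ℓ + 1) := by
  have hc : 2 * ((p ^ ℓ - 1) / 2) + 1 = p ^ ℓ := Nat.two_mul_sub_one_div_two_add_one hodd.pow
  have hbound : ∀ t < p, (p ^ ℓ - 1) / 2 + 1 + p ^ ℓ * t ≤ p ^ (ℓ + 1) := fun t ht =>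
    calc (p ^ ℓ - 1) / 2 + 1 + p ^ ℓ * t ≤ p ^ ℓ * (t + 1) := by rw [mul_add]; omega
      _ ≤ p ^ (ℓ + 1) := by rw [pow_succ]; exact Nat.mul_le_mul_left _ ht
  rw [Icc_filter_padicValNat_two_mul_sub_one_eq_biUnion hp.one_lt hodd, card_biUnion]
  · refine sum_congr rfl fun t ht => ?_
    rw [mem_filter, mem_range] at ht
    rw [Nat.card_filter_Icc_modEq j (pow_pos hp.pos _) (by omega) (hbound t ht.1)]
    congr 1
    omega
  · intro t ht t' ht' hne
    simp only [coe_filter, mem_range, Set.mem_ofPred_eq] at ht ht'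
    refine disjoint_filter.mpr fun m _ h h' => hne ?_
    exact Nat.eq_of_add_pow_mul_modEq hp.pos ht.1 ht'.1 (h.symm.trans h')
end

section
/- Let p be an odd prime, a = 2b + 1 a positive odd integer, j = (ap − 1)/2, and ℓ ≥ 1. Then the number k of m in {1, ..., j} with v_p(2m − 1) = ℓ satisfies (p − 1)·⌊b/p^ℓ⌋ ≤ k ≤ (p − 1)·⌊(b + p^ℓ)/p^ℓ⌋. -/
/-!
Put `q = p ^ ℓ` and `j = b * p + (p - 1) / 2`. The `m` with `v_p(2m - 1) = ℓ` are those with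
`q ∣ 2m - 1` but not `p * q ∣ 2m - 1`, so the count is `N(q) - N(p * q)`, where
`N(d) = #{m ∈ [1, j] | d ∣ 2m - 1}`. For odd `d = 2h + 1` the shift `m ↦ m + h` turns this into a
count of multiples of `d`, giving `N(d) = ⌊(j + h) / d⌋`. Evaluated at `d = q` and `d = p * q`,
and with `b = q * ⌊b / q⌋ + r` split off, the difference is `(p - 1) * ⌊b / q⌋` plus a term in
`[0, p - 1]`.
-/

open Finset

theorem Nat.dvd_two_mul_sub_one_iff_dvd_add {h m : ℕ} (hm : 1 ≤ m) :
    2 * h + 1 ∣ 2 * m - 1 ↔ 2 * h + 1 ∣ m + h := by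
  have hcop : Nat.Coprime (2 * h + 1) 2 := Nat.coprime_two_right.mpr (odd_two_mul_add_one h)
  rw [← hcop.dvd_mul_left (n := m + h), show 2 * (m + h) = (2 * m - 1) + (2 * h + 1) by omega,
    Nat.dvd_add_self_right]

theorem Nat.card_filter_dvd_two_mul_sub_one (h j : ℕ) :
    #{m ∈ Icc 1 j | 2 * h + 1 ∣ 2 * m - 1} = (j + h) / (2 * h + 1) := by
  rw [← Nat.Ioc_filter_dvd_card_eq_div]
  refine card_nbij' (· + h) (· - h) ?_ ?_ ?_ ?_
  · intro m hm
    simp only [coe_filter, mem_Icc, Set.mem_ofPred_eq, mem_Ioc] at hm ⊢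
    exact ⟨by omega, (Nat.dvd_two_mul_sub_one_iff_dvd_add hm.1.1).mp hm.2⟩
  · intro n hn
    simp only [coe_filter, mem_Icc, Set.mem_ofPred_eq, mem_Ioc] at hn ⊢
    have : h < n := by have := Nat.le_of_dvd hn.1.1 hn.2; omega
    refine ⟨by omega, (Nat.dvd_two_mul_sub_one_iff_dvd_add (by omega)).mpr ?_⟩
    rw [Nat.sub_add_cancel this.le]
    exact hn.2
  · intro m _; simp
  · intro n hn
    simp only [coe_filter, Set.mem_ofPred_eq, mem_Ioc] at hn
    have := Nat.le_of_dvd hn.1.1 hn.2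
    simp only; omega

theorem card_filter_padicValNat_eq {p : ℕ} (hp : p ≠ 1) (ℓ : ℕ) (s : Finset ℕ) (f : ℕ → ℕ)
    (hf : ∀ m ∈ s, f m ≠ 0) :
    #{m ∈ s | padicValNat p (f m) = ℓ} =
      #{m ∈ s | p ^ ℓ ∣ f m} - #{m ∈ s | p ^ (ℓ + 1) ∣ f m} := by
  rw [← card_sdiff_of_subset (monotone_filter_right s fun _ _ => (pow_dvd_pow p ℓ.le_succ).trans)]
  congr 1
  ext m
  simp only [mem_filter, mem_sdiff]
  by_cases hm : m ∈ s
  · simp only [hm, true_and, padicValNat_dvd_iff_le_of_ne_one hp (hf m hm)]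
    omega
  · simp [hm]

theorem Nat.mul_add_div_mul_of_lt {p r : ℕ} (hr : r < p) (x q : ℕ) :
    (p * x + r) / (p * q) = x / q := by
  rw [← Nat.div_div_eq_div_mul, Nat.mul_add_div (by omega), Nat.div_eq_of_lt hr, add_zero]

theorem Nat.add_div_le_div_add_of_le_mul {q y n : ℕ} (hq : 0 < q) (hy : y ≤ q * n) (x : ℕ) :
    (x + y) / q ≤ x / q + n := by
  refine Nat.lt_succ_iff.mp ((Nat.div_lt_iff_lt_mul hq).mpr ?_)
  nlinarith [Nat.div_add_mod x q, Nat.mod_lt x hq]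

theorem Nat.add_mul_add_div_bounds {q n u : ℕ} (hq : 0 < q) (hu : u ≤ n) (x b : ℕ) :
    b / q * n + x / q ≤ (x + b * n + u) / q ∧ (x + b * n + u) / q ≤ b / q * n + x / q + n := by
  have hsplit : x + b * n + u = q * (b / q * n) + (x + (b % q * n + u)) := by
    conv_lhs => rw [← Nat.div_add_mod b q]
    ring
  have hrem : b % q * n + u ≤ q * n := by
    nlinarith [Nat.mod_lt b hq]
  rw [hsplit, Nat.mul_add_div hq]
  exact ⟨by gcongr; omega, by
    rw [add_assoc]; gcongr; exact Nat.add_div_le_div_add_of_le_mul hq hrem x⟩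

theorem stmt_7_general (p b ℓ : ℕ) (hp : p.Prime) (hodd : Odd p) :
    (p - 1) * (b / p ^ ℓ)
      ≤ ((Finset.Icc 1 (((2 * b + 1) * p - 1) / 2)).filter
          (fun m => padicValNat p (2 * m - 1) = ℓ)).card ∧
    ((Finset.Icc 1 (((2 * b + 1) * p - 1) / 2)).filter
        (fun m => padicValNat p (2 * m - 1) = ℓ)).card
      ≤ (p - 1) * ((b + p ^ ℓ) / p ^ ℓ) := by
  obtain ⟨v, hv⟩ := hodd.pow (n := ℓ)
  obtain ⟨u, hu⟩ := hodd
  have hj : ((2 * b + 1) * p - 1) / 2 = b * p + u := by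
    rw [show (2 * b + 1) * p = 2 * (b * p + u) + 1 by rw [hu]; ring, Nat.add_sub_cancel,
      Nat.mul_div_cancel_left _ two_pos]
  have hpow_succ : p ^ (ℓ + 1) = 2 * (v * p + u) + 1 := by rw [pow_succ, hv, hu]; ring
  have hcoarse : (b * p + u + (v * p + u)) / (2 * (v * p + u) + 1) = (b + v) / p ^ ℓ := by
    rw [show b * p + u + (v * p + u) = p * (b + v) + 2 * u by ring,
      show 2 * (v * p + u) + 1 = p * p ^ ℓ by rw [← hpow_succ, pow_succ'],
      Nat.mul_add_div_mul_of_lt (by omega)]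
  have hfine : (b * p + u + v) / (2 * v + 1) = (b + v + b * (p - 1) + u) / p ^ ℓ := by
    rw [← hv]; congr 1
    rw [hu, Nat.add_sub_cancel]; ring
  have hq : 0 < p ^ ℓ := pow_pos hp.pos ℓ
  obtain ⟨hlo, hhi⟩ := Nat.add_mul_add_div_bounds hq (by omega : u ≤ p - 1) (b + v) b
  rw [hj, card_filter_padicValNat_eq hp.ne_one ℓ _ _ fun m hm => by rw [mem_Icc] at hm; omega,
    hv, hpow_succ, Nat.card_filter_dvd_two_mul_sub_one, Nat.card_filter_dvd_two_mul_sub_one,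
    hcoarse, hfine, ← hv, Nat.add_div_right b hq, mul_add_one, mul_comm (p - 1)]
  constructor <;> omega

theorem stmt_7 (p b ℓ : ℕ) (hp : p.Prime) (hodd : Odd p) (hℓ : 1 ≤ ℓ) :
    (p - 1) * (b / p ^ ℓ)
      ≤ ((Finset.Icc 1 (((2 * b + 1) * p - 1) / 2)).filter
          (fun m => padicValNat p (2 * m - 1) = ℓ)).card ∧
    ((Finset.Icc 1 (((2 * b + 1) * p - 1) / 2)).filter
        (fun m => padicValNat p (2 * m - 1) = ℓ)).card
      ≤ (p - 1) * ((b + p ^ ℓ) / p ^ ℓ) :=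
  stmt_7_general p b ℓ hp hodd
end

section
/- Let p be an odd prime, a = 2b + 1 a positive odd integer, j = (ap − 1)/2, ℓ ≥ 1, and c_ℓ = (p^ℓ − 1)/2. Then the number of m in {1, ..., j} with v_p(2m − 1) = ℓ equals the sum over t in {0, ..., p−1}, t ≠ (p−1)/2, of ⌊(b + p^ℓ − 1 − c_{ℓ−1} − p^{ℓ−1} t)/p^ℓ⌋. -/
open Finset

/-- Counting odd multiples: number of `m ∈ [1,N]` with `D ∣ 2m-1`, for `D = 2C+1` odd. -/
lemma aux_count_dvd (N D C : ℕ) (hD : D = 2*C+1) :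
    ((Finset.Icc 1 N).filter (fun m => D ∣ 2*m-1)).card = (N + C)/D := by
  have hD0 : 0 < D := by omega
  have himg : (Finset.Icc 1 N).filter (fun m => D ∣ 2*m-1)
      = (Finset.Icc 1 ((N + C)/D)).image (fun s => D*s - C) := by
    ext m
    simp only [Finset.mem_filter, Finset.mem_Icc, Finset.mem_image]
    constructor
    · rintro ⟨⟨h1, h2⟩, u, hu⟩
      rcases Nat.even_or_odd u with ⟨v, rfl⟩ | ⟨t, rfl⟩
      · exfalso
        have e1 : D*(v+v) = 2*(D*v) := by ring
        omega
      · refine ⟨t+1, ⟨by omega, ?_⟩, ?_⟩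
        · rw [Nat.le_div_iff_mul_le hD0]
          have e1 : D*(2*t+1) = 2*(D*t) + D := by ring
          have e2 : (t+1)*D = D*t + D := by ring
          omega
        · have e1 : D*(2*t+1) = 2*(D*t) + D := by ring
          have e2 : D*(t+1) = D*t + D := by ring
          omega
    · rintro ⟨s, ⟨hs1, hs2⟩, rfl⟩
      obtain ⟨s', rfl⟩ : ∃ s', s = s' + 1 := ⟨s-1, by omega⟩
      have hsD : (s'+1)*D ≤ N + C := (Nat.le_div_iff_mul_le hD0).mp hs2
      have e1 : D*(s'+1) = D*s' + D := by ring
      have e2 : (s'+1)*D = D*s' + D := by ring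
      refine ⟨⟨by omega, by omega⟩, 2*s'+1, ?_⟩
      have e3 : D*(2*s'+1) = 2*(D*s') + D := by ring
      omega
  have hinj : Set.InjOn (fun s => D*s - C) (Finset.Icc 1 ((N+C)/D)) := by
    intro s hs t ht hst
    simp only [Finset.coe_Icc, Set.mem_Icc] at hs ht
    have h1 : D*1 ≤ D*s := Nat.mul_le_mul_left D hs.1
    have h2 : D*1 ≤ D*t := Nat.mul_le_mul_left D ht.1
    have : D*s = D*t := by simp only at hst; omega
    exact Nat.eq_of_mul_eq_mul_left hD0 this
  rw [himg, Finset.card_image_of_injOn hinj, Nat.card_Icc]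
  exact Nat.add_sub_cancel _ _

lemma aux_hermite1 (n q : ℕ) (hn : 0 < n) :
    ∑ s ∈ Finset.range n, (q + s)/n = q := by
  induction q with
  | zero =>
    apply Finset.sum_eq_zero
    intro s hs
    exact Nat.div_eq_of_lt (by simpa using Finset.mem_range.mp hs)
  | succ q ih =>
    have h1 := Finset.sum_range_succ (fun s => (q + s)/n) n
    have h2 := Finset.sum_range_succ' (fun s => (q + s)/n) n
    have h3 : ∑ s ∈ Finset.range n, (q + (s+1))/n
        = ∑ s ∈ Finset.range n, (q + 1 + s)/n := by
      apply Finset.sum_congr rfl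
      intro s _
      congr 1
      omega
    have h4 : (q+n)/n = q/n + 1 := Nat.add_div_right _ hn
    simp only [Nat.add_zero] at h1 h2
    rw [h3] at h2
    omega

lemma aux_hermite2 (n d a : ℕ) (hn : 0 < n) (hd : 0 < d) :
    ∑ s ∈ Finset.range n, (a + d*s)/(d*n) = a/d := by
  have key : ∀ s, (a + d*s)/(d*n) = (a/d + s)/n := by
    intro s
    conv_lhs => rw [← Nat.div_add_mod a d]
    have h1 : d*(a/d) + a%d + d*s = (d*n)*((a/d+s)/n) + (d*((a/d+s)%n) + a%d) := by
      have h2 : a/d + s = n*((a/d+s)/n) + (a/d+s)%n := (Nat.div_add_mod _ n).symm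
      calc d*(a/d) + a%d + d*s = d*(a/d + s) + a%d := by ring
        _ = d*(n*((a/d+s)/n) + (a/d+s)%n) + a%d := by rw [← h2]
        _ = (d*n)*((a/d+s)/n) + (d*((a/d+s)%n) + a%d) := by ring
    rw [h1, Nat.mul_add_div (by positivity)]
    have hlt : d*((a/d+s)%n) + a%d < d*n := by
      have hm : (a/d+s)%n < n := Nat.mod_lt _ hn
      have : d*((a/d+s)%n + 1) ≤ d*n := Nat.mul_le_mul_left d (by omega)
      have e1 : d*((a/d+s)%n + 1) = d*((a/d+s)%n) + d := by ring
      have : a % d < d := Nat.mod_lt _ hd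
      omega
    rw [Nat.div_eq_of_lt hlt, add_zero]
  simp only [key]
  exact aux_hermite1 n (a/d) hn

theorem stmt_8 (p b ℓ : ℕ) (hp : p.Prime) (hodd : Odd p) (hℓ : 1 ≤ ℓ) :
    ((Finset.Icc 1 (((2 * b + 1) * p - 1) / 2)).filter
      (fun m => padicValNat p (2 * m - 1) = ℓ)).card
      = ∑ t ∈ (Finset.range p).filter (fun t => t ≠ (p - 1) / 2),
          (b + p ^ ℓ - 1 - (p ^ (ℓ - 1) - 1) / 2 - p ^ (ℓ - 1) * t) / p ^ ℓ := by
  classical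
  haveI : Fact p.Prime := ⟨hp⟩
  have hp2 : p % 2 = 1 := Nat.odd_iff.mp hodd
  have hp3 : 3 ≤ p := by
    have := hp.two_le; omega
  set e := (p-1)/2 with he
  have hpe : p = 2*e + 1 := by omega
  obtain ⟨k, rfl⟩ : ∃ k, ℓ = k + 1 := ⟨ℓ-1, by omega⟩
  have hd0 : 0 < p^k := pow_pos (by omega : 0 < p) k
  set d := p^k with hd
  have hdodd : d % 2 = 1 := Nat.odd_iff.mp (hodd.pow)
  set c := (d - 1)/2 with hc
  have hdc : d = 2*c + 1 := by omega
  have hpl : p^(k+1) = d*p := by rw [hd, pow_succ]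
  have hpl2 : p^(k+2) = d*p*p := by rw [pow_succ, pow_succ, ← hd]
  -- d*p = 2*(d*e+c)+1
  have hdp : d*p = 2*(d*e+c)+1 := by
    have h1 : d*p = 2*(d*e) + d := by rw [hpe]; ring
    omega
  have hdpp : d*p*p = 2*(p*(d*e+c)+e)+1 := by
    have e1 : d*p*p = (2*(d*e+c)+1)*p := by rw [hdp]
    have e2 : (2*(d*e+c)+1)*p = 2*((d*e+c)*p) + p := by ring
    have e3 : p*(d*e+c) = (d*e+c)*p := by ring
    omega
  -- j
  have hj : ((2*b+1)*p - 1)/2 = b*p + e := by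
    have h1 : (2*b+1)*p = 2*(b*p) + p := by ring
    omega
  rw [hj]
  -- counts of divisibility
  have hcount1 : ((Finset.Icc 1 (b*p+e)).filter (fun m => d*p ∣ 2*m-1)).card = (b+c)/d := by
    rw [aux_count_dvd _ _ _ hdp]
    have h3 : b*p + e + (d*e+c) = p*(b+c) + (p-1) := by
      have e1 : b*p = 2*(b*e) + b := by rw [hpe]; ring
      have e2 : d*e = 2*(c*e) + e := by rw [hdc]; ring
      have e3 : p*(b+c) = 2*(b*e) + b + 2*(c*e) + c := by rw [hpe]; ring
      omega
    have hz : (p-1)/p = 0 := Nat.div_eq_of_lt (by omega)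
    rw [h3, mul_comm d p, ← Nat.div_div_eq_div_mul,
      Nat.mul_add_div (by omega : 0 < p), hz, add_zero]
  have hcount2 : ((Finset.Icc 1 (b*p+e)).filter (fun m => d*p*p ∣ 2*m-1)).card
      = (b+(d*e+c))/(d*p) := by
    rw [aux_count_dvd _ _ _ hdpp]
    have h3 : b*p + e + (p*(d*e+c)+e) = p*(b+(d*e+c)) + (p-1) := by
      have e1 : b*p = p*b := by ring
      have e2 : p*(b+(d*e+c)) = p*b + p*(d*e+c) := by ring
      omega
    have hz : (p-1)/p = 0 := Nat.div_eq_of_lt (by omega)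
    rw [h3, show d*p*p = p*(d*p) from by ring, ← Nat.div_div_eq_div_mul,
      Nat.mul_add_div (by omega : 0 < p), hz, add_zero]
  -- LHS equals difference of counts
  have hchar : ∀ m ∈ Finset.Icc 1 (b*p+e),
      (padicValNat p (2*m-1) = k+1 ↔ (d*p ∣ 2*m-1 ∧ ¬ (d*p*p ∣ 2*m-1))) := by
    intro m hm
    simp only [Finset.mem_Icc] at hm
    have hne : 2*m-1 ≠ 0 := by omega
    rw [← hpl2, ← hpl, padicValNat_dvd_iff_le hne, padicValNat_dvd_iff_le hne]
    omega
  have hLHS : ((Finset.Icc 1 (b*p+e)).filter (fun m => padicValNat p (2*m-1) = k+1)).card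
      = (b+c)/d - (b+(d*e+c))/(d*p) := by
    rw [Finset.filter_congr hchar]
    have hsplit := Finset.card_filter_add_card_filter_not
      (s := (Finset.Icc 1 (b*p+e)).filter (fun m => d*p ∣ 2*m-1))
      (p := fun m => d*p*p ∣ 2*m-1)
    rw [Finset.filter_filter, Finset.filter_filter] at hsplit
    have hBA : (Finset.Icc 1 (b*p+e)).filter (fun m => d*p ∣ 2*m-1 ∧ d*p*p ∣ 2*m-1)
        = (Finset.Icc 1 (b*p+e)).filter (fun m => d*p*p ∣ 2*m-1) := by
      apply Finset.filter_congr
      intro m _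
      constructor
      · exact fun h => h.2
      · exact fun h => ⟨dvd_trans ⟨p, rfl⟩ h, h⟩
    rw [hBA] at hsplit
    omega
  rw [hLHS]
  -- RHS
  simp only [Nat.add_sub_cancel, ← hd, hpl, ← hc]
  rw [Finset.filter_ne' (Finset.range p) e]
  have hmem : e ∈ Finset.range p := Finset.mem_range.mpr (by omega)
  have hterm : ∀ t < p, b + d*p - 1 - c - d*t = b + c + d*((p-1) - t) := by
    intro t ht
    have e1 : d*(((p-1)-t)+t) = d*((p-1)-t) + d*t := by ring
    have e2 : ((p-1)-t) + t = p-1 := by omega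
    have e3 : d*((p-1)+1) = d*(p-1) + d := by ring
    have e4 : (p-1)+1 = p := by omega
    rw [e2] at e1
    rw [e4] at e3
    omega
  have htot : ∑ t ∈ Finset.range p, (b + d*p - 1 - c - d*t)/(d*p) = (b+c)/d := by
    have h1 : ∑ t ∈ Finset.range p, (b + d*p - 1 - c - d*t)/(d*p)
        = ∑ t ∈ Finset.range p, (b + c + d*((p-1) - t))/(d*p) := by
      apply Finset.sum_congr rfl
      intro t ht
      rw [hterm t (Finset.mem_range.mp ht)]
    rw [h1]
    have h2 := Finset.sum_range_reflect (fun t => (b + c + d*t)/(d*p)) p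
    rw [h2]
    exact aux_hermite2 p d (b+c) (by omega) hd0
  have hsum : (∑ t ∈ (Finset.range p).erase e, (b + d*p - 1 - c - d*t)/(d*p))
      + (b + d*p - 1 - c - d*e)/(d*p)
      = ∑ t ∈ Finset.range p, (b + d*p - 1 - c - d*t)/(d*p) :=
    Finset.sum_erase_add (Finset.range p) _ hmem
  have hmid : (b + d*p - 1 - c - d*e)/(d*p) = (b+(d*e+c))/(d*p) := by
    have h1 := hterm e (by omega)
    have h2 : (p-1) - e = e := by omega
    rw [h2] at h1
    rw [h1]
    congr 1
    omega
  rw [htot, hmid] at hsum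
  omega
end
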